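/- Let X⊂ℝ^n be a nonempty convex compact set, A a d×n real matrix, a∈ℝ^d, x↦M(x) an affine map from ℝ^n to S^d with M(x)⪰0 for all x∈X, G(x)=gᵀx+c an affine function, K a positive integer, and ε∈(0,1). Define Ψ̂₊(f) = max_{x∈X}{ √(2K^{−1}ln(2/ε)·fᵀM(x)f) + fᵀAx − G(x) } + aᵀf and Ψ̂₋(f) = max_{x∈X}{ √(2K^{−1}ln(2/ε)·fᵀM(x)f) − fᵀAx + G(x) } − aᵀf. Then for every f̄∈ℝ^d, setting κ̄ = (1/2)(Ψ̂₋(f̄) − Ψ̂₊(f̄)) and ρ̄ = (1/2)(Ψ̂₊(f̄) + Ψ̂₋(f̄)), the following holds: for every x∈X and every Borel probability distribution P on ℝ^d that is sub-Gaussian with parameters (Ax+a, M(x)), one has Prob_{ω^K∼P^K}{ |(1/K)Σ_{i=1}^K f̄ᵀω_i + κ̄ − G(x)| > ρ̄ } ≤ ε, where P^K is the distribution of K independent draws from P. -/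

import Mathlib

/-!
Along a direction `f`, an observation `ω ∼ P` with `P` sub-Gaussian with parameters `(θ, Θ)` gives
a centred variable `fᵀω - fᵀθ` that is sub-Gaussian with variance proxy `fᵀΘf`. The sum over `K`
independent draws then has proxy `K fᵀΘf`, and Chernoff's bound shows that the empirical mean of
`fᵀωᵢ` exceeds `fᵀθ + √(2K⁻¹ ln(2/ε) fᵀΘf)` with probability at most `ε/2`. Since `x ∈ X`,
`Ψ̂₊(f̄) + G(x)` and `Ψ̂₋(f̄) - G(x)` dominate these thresholds for `f̄` and `-f̄`, and
`|mean + κ̄ - G(x)| > ρ̄` says exactly that one of the two thresholds is crossed: a union bound ends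
the proof.
-/

open Matrix MeasureTheory Real

noncomputable section

/-- `P` is sub-Gaussian with parameters `(θ,Θ)`:
`ln E_{ω∼P}[e^{hᵀω}] ≤ hᵀθ + (1/2)hᵀΘh` for all `h`. -/
def SubGaussianWith {d : ℕ} (θ : Fin d → ℝ) (Θ : Matrix (Fin d) (Fin d) ℝ)
    (P : Measure (Fin d → ℝ)) : Prop :=
  ∀ h : Fin d → ℝ, ∫⁻ ω, ENNReal.ofReal (Real.exp (h ⬝ᵥ ω)) ∂P
    ≤ ENNReal.ofReal (Real.exp (h ⬝ᵥ θ + (1/2) * (h ⬝ᵥ Θ.mulVec h)))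

/-- `Ψ̂₊(f)` of Proposition 3.4. -/
def PsiSGPlus {d n : ℕ} (X : Set (Fin n → ℝ)) (A : Matrix (Fin d) (Fin n) ℝ)
    (a : Fin d → ℝ) (M : (Fin n → ℝ) →ᵃ[ℝ] Matrix (Fin d) (Fin d) ℝ)
    (g : Fin n → ℝ) (c : ℝ) (K : ℕ) (ε : ℝ) (f : Fin d → ℝ) : ℝ :=
  sSup ((fun x => Real.sqrt (2 * (K : ℝ)⁻¹ * Real.log (2/ε) * (f ⬝ᵥ (M x).mulVec f))
      + f ⬝ᵥ A.mulVec x - (g ⬝ᵥ x + c)) '' X) + a ⬝ᵥ f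

/-- `Ψ̂₋(f)` of Proposition 3.4. -/
def PsiSGMinus {d n : ℕ} (X : Set (Fin n → ℝ)) (A : Matrix (Fin d) (Fin n) ℝ)
    (a : Fin d → ℝ) (M : (Fin n → ℝ) →ᵃ[ℝ] Matrix (Fin d) (Fin d) ℝ)
    (g : Fin n → ℝ) (c : ℝ) (K : ℕ) (ε : ℝ) (f : Fin d → ℝ) : ℝ :=
  sSup ((fun x => Real.sqrt (2 * (K : ℝ)⁻¹ * Real.log (2/ε) * (f ⬝ᵥ (M x).mulVec f))
      - f ⬝ᵥ A.mulVec x + (g ⬝ᵥ x + c)) '' X) - a ⬝ᵥ f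

open ProbabilityTheory

namespace SubGaussianWith

variable {d : ℕ} {θ : Fin d → ℝ} {Θ : Matrix (Fin d) (Fin d) ℝ} {P : Measure (Fin d → ℝ)}

theorem integrable_exp_dotProduct (hP : SubGaussianWith θ Θ P) (h : Fin d → ℝ) :
    Integrable (fun ω => exp (h ⬝ᵥ ω)) P :=
  (lintegral_ofReal_ne_top_iff_integrable (by fun_prop)
    (Filter.Eventually.of_forall fun _ => (exp_pos _).le)).1
    (ne_top_of_le_ne_top ENNReal.ofReal_ne_top (hP h))

theorem integral_exp_dotProduct_le (hP : SubGaussianWith θ Θ P) (h : Fin d → ℝ) :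
    ∫ ω, exp (h ⬝ᵥ ω) ∂P ≤ exp (h ⬝ᵥ θ + (1/2) * (h ⬝ᵥ Θ *ᵥ h)) := by
  rw [integral_eq_lintegral_of_nonneg_ae (Filter.Eventually.of_forall fun _ => (exp_pos _).le)
    (by fun_prop)]
  exact ENNReal.toReal_le_of_le_ofReal (exp_pos _).le (hP h)

theorem hasSubgaussianMGF_dotProduct_sub (hP : SubGaussianWith θ Θ P) (f : Fin d → ℝ) :
    HasSubgaussianMGF (fun ω => f ⬝ᵥ ω - f ⬝ᵥ θ) (f ⬝ᵥ Θ *ᵥ f).toNNReal P := by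
  have hexp (t : ℝ) (ω : Fin d → ℝ) :
      exp (t * (f ⬝ᵥ ω - f ⬝ᵥ θ)) = exp (-(t * f ⬝ᵥ θ)) * exp ((t • f) ⬝ᵥ ω) := by
    rw [← exp_add, smul_dotProduct, smul_eq_mul]; ring_nf
  refine ⟨fun t => ?_, fun t => ?_⟩
  · simp_rw [hexp]
    exact (hP.integrable_exp_dotProduct _).const_mul _
  · calc mgf (fun ω => f ⬝ᵥ ω - f ⬝ᵥ θ) P t
        = exp (-(t * f ⬝ᵥ θ)) * ∫ ω, exp ((t • f) ⬝ᵥ ω) ∂P := by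
          simp_rw [mgf, hexp, integral_const_mul]
      _ ≤ exp (-(t * f ⬝ᵥ θ)) * exp ((t • f) ⬝ᵥ θ + (1/2) * ((t • f) ⬝ᵥ Θ *ᵥ (t • f))) := by
          gcongr; exact hP.integral_exp_dotProduct_le _
      _ = exp ((f ⬝ᵥ Θ *ᵥ f) * t ^ 2 / 2) := by
          rw [← exp_add]; congr 1
          simp only [smul_dotProduct, mulVec_smul, dotProduct_smul, smul_eq_mul]; ring
      _ ≤ exp ((f ⬝ᵥ Θ *ᵥ f).toNNReal * t ^ 2 / 2) := by
          gcongr; exact Real.le_coe_toNNReal _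

end SubGaussianWith

theorem ProbabilityTheory.HasSubgaussianMGF.sum_pi {α ι : Type*} [MeasurableSpace α]
    [Fintype ι] {μ : Measure α} [IsProbabilityMeasure μ] {Y : α → ℝ} {c : NNReal}
    (hY : HasSubgaussianMGF Y c μ) :
    HasSubgaussianMGF (fun ω : ι → α => ∑ i, Y (ω i)) (Fintype.card ι * c)
      (Measure.pi fun _ => μ) := by
  have hcoord (i : ι) :
      HasSubgaussianMGF (fun ω : ι → α => Y (ω i)) c (Measure.pi fun _ => μ) :=
    HasSubgaussianMGF.of_map (Y := fun ω : ι → α => ω i)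
      (measurable_pi_apply i).aemeasurable
      (by rwa [(measurePreserving_eval (fun _ => μ) i).map_eq])
  simpa using HasSubgaussianMGF.sum_of_iIndepFun (s := Finset.univ)
    (iIndepFun_pi (X := fun _ => Y) fun _ => hY.aemeasurable) fun i _ => hcoord i

theorem ProbabilityTheory.HasSubgaussianMGF.measure_gt_le_exp_neg {Ω : Type*}
    [MeasurableSpace Ω] {μ : Measure Ω} [IsFiniteMeasure μ] {Z : Ω → ℝ} {c : NNReal}
    (hZ : HasSubgaussianMGF Z c μ) {r L : ℝ} (hr : √(2 * c * L) ≤ r) :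
    μ {ω | r < Z ω} ≤ ENNReal.ofReal (exp (-L)) := by
  have hr0 : 0 ≤ r := (sqrt_nonneg _).trans hr
  -- At `c = 0` Mathlib's bound `exp (-r ^ 2 / (2 * c))` is `1`; use `Z = 0` a.e. instead.
  rcases eq_or_ne c 0 with rfl | hc
  · have hnull : μ {ω | r < Z ω} = 0 := measure_mono_null
      (fun ω hω => (hr0.trans_lt hω).ne') (hZ.ae_eq_zero_of_hasSubgaussianMGF_zero)
    exact hnull ▸ zero_le
  have hL : L ≤ r ^ 2 / (2 * c) := by
    rw [le_div_iff₀ (by positivity)]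
    nlinarith [(sqrt_le_iff.1 hr).2]
  calc μ {ω | r < Z ω} ≤ μ {ω | r ≤ Z ω} :=
        measure_mono (Set.ofPred_subset_ofPred.2 fun _ => le_of_lt)
    _ = ENNReal.ofReal (μ.real {ω | r ≤ Z ω}) := (ofReal_measureReal (measure_ne_top _ _)).symm
    _ ≤ ENNReal.ofReal (exp (-L)) := by
      gcongr
      refine (hZ.measure_ge_le hr0).trans (exp_le_exp.2 ?_)
      rw [neg_div]; linarith

theorem SubGaussianWith.measure_mean_gt_le_exp_neg {d : ℕ} {θ : Fin d → ℝ}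
    {Θ : Matrix (Fin d) (Fin d) ℝ} {P : Measure (Fin d → ℝ)} [IsProbabilityMeasure P]
    (hP : SubGaussianWith θ Θ P) (hΘ : Θ.PosSemidef) (f : Fin d → ℝ) {K : ℕ} (hK : 0 < K)
    {L s : ℝ} (hs : f ⬝ᵥ θ + √(2 * (K : ℝ)⁻¹ * L * (f ⬝ᵥ Θ *ᵥ f)) ≤ s) :
    (Measure.pi fun _ : Fin K => P) {ω | s < (K : ℝ)⁻¹ * ∑ i, f ⬝ᵥ ω i}
      ≤ ENNReal.ofReal (exp (-L)) := by
  have hK' : (0 : ℝ) < K := Nat.cast_pos.2 hK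
  have hσ : ((f ⬝ᵥ Θ *ᵥ f).toNNReal : ℝ) = f ⬝ᵥ Θ *ᵥ f :=
    Real.coe_toNNReal _ (by simpa using hΘ.dotProduct_mulVec_nonneg f)
  have hsum := (hP.hasSubgaussianMGF_dotProduct_sub f).sum_pi (ι := Fin K)
  rw [Fintype.card_fin] at hsum
  have hr : √(2 * ((K * (f ⬝ᵥ Θ *ᵥ f).toNNReal : NNReal) : ℝ) * L) ≤ K * (s - f ⬝ᵥ θ) := by
    have : 2 * ((K * (f ⬝ᵥ Θ *ᵥ f).toNNReal : NNReal) : ℝ) * L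
        = K ^ 2 * (2 * (K : ℝ)⁻¹ * L * (f ⬝ᵥ Θ *ᵥ f)) := by
      push_cast [hσ]; field_simp
    rw [this, sqrt_mul (by positivity), sqrt_sq hK'.le]
    gcongr; linarith
  refine (measure_mono fun ω (hω : s < _) => ?_).trans (hsum.measure_gt_le_exp_neg hr)
  show K * (s - f ⬝ᵥ θ) < ∑ i, (f ⬝ᵥ ω i - f ⬝ᵥ θ)
  rw [Finset.sum_sub_distrib, Finset.sum_const, Finset.card_univ, Fintype.card_fin, nsmul_eq_mul]
  linarith [(lt_inv_mul_iff₀ hK').1 hω]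

section PsiSG

variable {d n : ℕ} {X : Set (Fin n → ℝ)} {x : Fin n → ℝ} (A : Matrix (Fin d) (Fin n) ℝ)
  (a : Fin d → ℝ) (M : (Fin n → ℝ) →ᵃ[ℝ] Matrix (Fin d) (Fin d) ℝ) (g : Fin n → ℝ) (c : ℝ)
  (K : ℕ) (ε : ℝ) (f : Fin d → ℝ)

theorem le_psiSGPlus (hX : IsCompact X) (hx : x ∈ X) :
    √(2 * (K : ℝ)⁻¹ * log (2 / ε) * (f ⬝ᵥ M x *ᵥ f)) + f ⬝ᵥ A *ᵥ x - (g ⬝ᵥ x + c) + a ⬝ᵥ f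
      ≤ PsiSGPlus X A a M g c K ε f := by
  have hM : Continuous M :=
    AffineMap.continuous_linear_iff.1 M.linear.continuous_of_finiteDimensional
  unfold PsiSGPlus
  gcongr
  refine le_csSup ?_ ⟨x, hx, rfl⟩
  exact hX.bddAbove_image (Continuous.continuousOn (by fun_prop))

theorem le_psiSGMinus (hX : IsCompact X) (hx : x ∈ X) :
    √(2 * (K : ℝ)⁻¹ * log (2 / ε) * (f ⬝ᵥ M x *ᵥ f)) - f ⬝ᵥ A *ᵥ x + (g ⬝ᵥ x + c) - a ⬝ᵥ f
      ≤ PsiSGMinus X A a M g c K ε f := by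
  have hM : Continuous M :=
    AffineMap.continuous_linear_iff.1 M.linear.continuous_of_finiteDimensional
  unfold PsiSGMinus
  gcongr
  refine le_csSup ?_ ⟨x, hx, rfl⟩
  exact hX.bddAbove_image (Continuous.continuousOn (by fun_prop))

end PsiSG

theorem statement15_general {d n : ℕ}
    (X : Set (Fin n → ℝ))
    (hXcpt : IsCompact X)
    (A : Matrix (Fin d) (Fin n) ℝ) (a : Fin d → ℝ)
    (M : (Fin n → ℝ) →ᵃ[ℝ] Matrix (Fin d) (Fin d) ℝ)
    (hMpsd : ∀ x ∈ X, (M x).PosSemidef)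
    (g : Fin n → ℝ) (c : ℝ) (K : ℕ) (hK : 1 ≤ K)
    (ε : ℝ) (hε0 : 0 < ε)
    (fbar : Fin d → ℝ)
    (κbar ρbar : ℝ)
    (hκ : κbar = (1/2) * (PsiSGMinus X A a M g c K ε fbar
                          - PsiSGPlus X A a M g c K ε fbar))
    (hρ : ρbar = (1/2) * (PsiSGPlus X A a M g c K ε fbar
                          + PsiSGMinus X A a M g c K ε fbar))
    (x : Fin n → ℝ) (hx : x ∈ X)
    (P : Measure (Fin d → ℝ)) [IsProbabilityMeasure P]
    (hP : SubGaussianWith (A.mulVec x + a) (M x) P) :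
    (Measure.pi fun _ : Fin K => P)
        {ω | ρbar < |(K : ℝ)⁻¹ * ∑ i, fbar ⬝ᵥ ω i + κbar - (g ⬝ᵥ x + c)|}
      ≤ ENNReal.ofReal ε := by
  set Ψp := PsiSGPlus X A a M g c K ε fbar
  set Ψm := PsiSGMinus X A a M g c K ε fbar
  set G := g ⬝ᵥ x + c
  have hθ : fbar ⬝ᵥ (A *ᵥ x + a) = fbar ⬝ᵥ A *ᵥ x + a ⬝ᵥ fbar := by
    rw [dotProduct_add, dotProduct_comm fbar a]
  have hupper := hP.measure_mean_gt_le_exp_neg (hMpsd x hx) fbar hK (L := log (2 / ε))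
    (s := Ψp + G) (by linarith [le_psiSGPlus A a M g c K ε fbar hXcpt hx])
  have hquad_neg : (-fbar) ⬝ᵥ M x *ᵥ (-fbar) = fbar ⬝ᵥ M x *ᵥ fbar := by
    rw [mulVec_neg, dotProduct_neg, neg_dotProduct, neg_neg]
  have hlower := hP.measure_mean_gt_le_exp_neg (hMpsd x hx) (-fbar) hK (L := log (2 / ε))
    (s := Ψm - G) (by
      rw [hquad_neg, neg_dotProduct]
      linarith [le_psiSGMinus A a M g c K ε fbar hXcpt hx])
  have hL : exp (-log (2 / ε)) = ε / 2 := by rw [exp_neg, exp_log (by positivity), inv_div]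
  rw [hL] at hupper hlower
  calc _ ≤ (Measure.pi fun _ : Fin K => P) ({ω | Ψp + G < (K : ℝ)⁻¹ * ∑ i, fbar ⬝ᵥ ω i}
          ∪ {ω | Ψm - G < (K : ℝ)⁻¹ * ∑ i, -fbar ⬝ᵥ ω i}) := by
        refine measure_mono fun ω hω => ?_
        simp only [Set.mem_union, Set.mem_ofPred_eq, neg_dotProduct, Finset.sum_neg_distrib,
          mul_neg] at hω ⊢
        rcases lt_abs.1 hω with h | h
        · left; linarith
        · right; linarith
    _ ≤ ENNReal.ofReal (ε / 2) + ENNReal.ofReal (ε / 2) :=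
        (measure_union_le _ _).trans (add_le_add hupper hlower)
    _ = ENNReal.ofReal ε := by
        rw [← ENNReal.ofReal_add (by positivity) (by positivity), add_halves]

/-- the affine estimate `(1/K)Σᵢ f̄ᵀωᵢ + κ̄` recovers `G(x) = gᵀx + c`
from `K` i.i.d. sub-Gaussian observations with ε-risk at most
`ρ̄ = (1/2)(Ψ̂₊(f̄)+Ψ̂₋(f̄))`. -/
theorem statement15 {d n : ℕ}
    (X : Set (Fin n → ℝ)) (hXne : X.Nonempty) (hXconv : Convex ℝ X)
    (hXcpt : IsCompact X)
    (A : Matrix (Fin d) (Fin n) ℝ) (a : Fin d → ℝ)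
    (M : (Fin n → ℝ) →ᵃ[ℝ] Matrix (Fin d) (Fin d) ℝ)
    (hMsym : ∀ x, (M x).IsSymm) (hMpsd : ∀ x ∈ X, (M x).PosSemidef)
    (g : Fin n → ℝ) (c : ℝ) (K : ℕ) (hK : 1 ≤ K)
    (ε : ℝ) (hε0 : 0 < ε) (hε1 : ε < 1)
    (fbar : Fin d → ℝ)
    (κbar ρbar : ℝ)
    (hκ : κbar = (1/2) * (PsiSGMinus X A a M g c K ε fbar
                          - PsiSGPlus X A a M g c K ε fbar))
    (hρ : ρbar = (1/2) * (PsiSGPlus X A a M g c K ε fbar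
                          + PsiSGMinus X A a M g c K ε fbar))
    (x : Fin n → ℝ) (hx : x ∈ X)
    (P : Measure (Fin d → ℝ)) [IsProbabilityMeasure P]
    (hP : SubGaussianWith (A.mulVec x + a) (M x) P) :
    (Measure.pi fun _ : Fin K => P)
        {ω | ρbar < |(K : ℝ)⁻¹ * ∑ i, fbar ⬝ᵥ ω i + κbar - (g ⬝ᵥ x + c)|}
      ≤ ENNReal.ofReal ε :=
  statement15_general X hXcpt A a M hMpsd g c K hK ε hε0 fbar κbar ρbar hκ hρ x hx P hP
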